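/- arXiv:2301.11955 — 3 statements merged into one kernel-verified Lean document; each statement's English description precedes it below -/
import Mathlib

section
/- Let N ≥ 2 and K ≥ N(N+1)/2. Let w_1, …, w_K ∈ ℝ^N be unit vectors such that the rank-one matrices w_1 w_1ᵀ, …, w_K w_Kᵀ span the vector space S^N of N×N real symmetric matrices. Let y_1, …, y_T ∈ ℝ^N (T ≥ 1) and let C_yy := (1/T) Σ_{t=1}^T y_t y_tᵀ. Then C_yy = I_N if and only if for every i = 1, …, K the projected variance (1/T) Σ_{t=1}^T (w_iᵀ y_t)² equals 1. -/
open Matrix BigOperators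

noncomputable section

/-- The submodule of `N × N` real symmetric matrices (denoted `S^N` in the paper). -/
def symmMat (N : ℕ) : Submodule ℝ (Matrix (Fin N) (Fin N) ℝ) where
  carrier := {A | A.IsSymm}
  add_mem' := fun ha hb => Matrix.IsSymm.add ha hb
  zero_mem' := Matrix.isSymm_zero
  smul_mem' := fun c _ hA => Matrix.IsSymm.smul hA c

lemma frob_one (N : ℕ) (v : Fin N → ℝ) :
    ∑ a, ∑ b, vecMulVec v v a b * (1 : Matrix (Fin N) (Fin N) ℝ) a b = v ⬝ᵥ v := by
  simp [Matrix.one_apply, vecMulVec_apply, mul_ite, dotProduct]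

/-- **Proposition 1**: if unit vectors `w 1, …, w K` (with `K ≥ N(N+1)/2`) are such that the
rank-one matrices `wᵢ wᵢᵀ` span the space of symmetric matrices, then the sample covariance
of `y 1, …, y T` equals the identity iff all projected variances `⟨(wᵢᵀ yₜ)²⟩ₜ` equal `1`. -/
theorem marginal_variance_whitening_equivalence
    (N K T : ℕ) (hN : 2 ≤ N) (hK : N * (N + 1) / 2 ≤ K) (hT : 1 ≤ T)
    (w : Fin K → (Fin N → ℝ))
    (hunit : ∀ i, w i ⬝ᵥ w i = 1)
    (hspan : Submodule.span ℝ (Set.range fun i => vecMulVec (w i) (w i)) = symmMat N)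
    (y : Fin T → (Fin N → ℝ)) :
    (T : ℝ)⁻¹ • (∑ t, vecMulVec (y t) (y t)) = (1 : Matrix (Fin N) (Fin N) ℝ) ↔
      ∀ i, (T : ℝ)⁻¹ * ∑ t, (w i ⬝ᵥ y t) ^ 2 = 1 := by
  set C : Matrix (Fin N) (Fin N) ℝ := (T : ℝ)⁻¹ • (∑ t, vecMulVec (y t) (y t)) with hCdef
  have key : ∀ v : Fin N → ℝ, (T : ℝ)⁻¹ * ∑ t, (v ⬝ᵥ y t) ^ 2
      = ∑ a, ∑ b, vecMulVec v v a b * C a b := by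
    intro v
    have h1 : ∀ t : Fin T, (v ⬝ᵥ y t) ^ 2
        = ∑ a, ∑ b, vecMulVec v v a b * vecMulVec (y t) (y t) a b := by
      intro t
      simp only [dotProduct, vecMulVec_apply, pow_two, Finset.sum_mul_sum]
      exact Finset.sum_congr rfl fun a _ => Finset.sum_congr rfl fun b _ => by ring
    simp only [h1, hCdef, Matrix.smul_apply, Matrix.sum_apply, smul_eq_mul,
      vecMulVec_apply]
    have hswap : ∑ t, ∑ a, ∑ b, v a * v b * (y t a * y t b)
        = ∑ a, ∑ b, ∑ t, v a * v b * (y t a * y t b) := by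
      rw [Finset.sum_comm]
      exact Finset.sum_congr rfl fun a _ => Finset.sum_comm
    rw [hswap, Finset.mul_sum]
    refine Finset.sum_congr rfl fun a _ => ?_
    rw [Finset.mul_sum]
    refine Finset.sum_congr rfl fun b _ => ?_
    simp only [Finset.mul_sum]
    exact Finset.sum_congr rfl fun t _ => by ring
  constructor
  · intro hC i
    rw [key, hC, frob_one, hunit]
  · intro h
    set D : Matrix (Fin N) (Fin N) ℝ := C - 1 with hDdef
    have hDsymm : D.IsSymm := by
      have hCsymm : C.IsSymm := by
        rw [hCdef]
        apply Matrix.IsSymm.smul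
        unfold Matrix.IsSymm
        rw [Matrix.transpose_sum]
        refine Finset.sum_congr rfl fun t _ => ?_
        ext a b
        simp [vecMulVec_apply, mul_comm]
      unfold Matrix.IsSymm at *
      rw [hDdef, Matrix.transpose_sub, hCsymm, Matrix.transpose_one]
    let L : Matrix (Fin N) (Fin N) ℝ →ₗ[ℝ] ℝ :=
      { toFun := fun A => ∑ a, ∑ b, A a b * D a b
        map_add' := fun A B => by
          simp [add_mul, Finset.sum_add_distrib]
        map_smul' := fun c A => by
          simp [Finset.mul_sum, mul_assoc] }
    have hLgen : ∀ i, L (vecMulVec (w i) (w i)) = 0 := by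
      intro i
      have : L (vecMulVec (w i) (w i))
          = (∑ a, ∑ b, vecMulVec (w i) (w i) a b * C a b)
            - ∑ a, ∑ b, vecMulVec (w i) (w i) a b * (1 : Matrix (Fin N) (Fin N) ℝ) a b := by
        simp only [L, LinearMap.coe_mk, AddHom.coe_mk, hDdef, Matrix.sub_apply,
          mul_sub, Finset.sum_sub_distrib]
      rw [this, ← key, frob_one, hunit, h i, sub_self]
    have hspanle : Submodule.span ℝ (Set.range fun i => vecMulVec (w i) (w i))
        ≤ LinearMap.ker L := by
      rw [Submodule.span_le]
      rintro _ ⟨i, rfl⟩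
      exact hLgen i
    have hDmem : D ∈ symmMat N := hDsymm
    rw [← hspan] at hDmem
    have hLD : L D = 0 := hspanle hDmem
    have hDzero : D = 0 := by
      have hsum : ∑ a, ∑ b, D a b * D a b = 0 := hLD
      ext a b
      have h1 : ∀ a : Fin N, (0:ℝ) ≤ ∑ b, D a b * D a b :=
        fun a => Finset.sum_nonneg fun b _ => mul_self_nonneg _
      have h2 : ∑ b, D a b * D a b = 0 := by
        have := (Finset.sum_eq_zero_iff_of_nonneg (fun a _ => h1 a)).mp hsum a (Finset.mem_univ a)
        exact this
      have h3 := (Finset.sum_eq_zero_iff_of_nonneg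
        (fun b _ => mul_self_nonneg (D a b))).mp h2 b (Finset.mem_univ b)
      have := mul_self_eq_zero.mp h3
      simpa using this
    have : C = 1 := by rwa [hDdef, sub_eq_zero] at hDzero
    exact this
end
end

section
/- Let X ∈ ℝ^{N×T} with T ≥ 1, let C := (1/T) X Xᵀ, and let C^{1/2} denote the positive semidefinite square root of the positive semidefinite matrix C. Then for every Y ∈ ℝ^{N×T} satisfying Y Yᵀ = T · I_N, one has Tr(X Yᵀ) ≤ T · Tr(C^{1/2}). -/
open Matrix BigOperators

noncomputable section

open scoped ComplexOrder in
/-- The positive semidefinite square root of a positive semidefinite matrix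
(the definition `Matrix.PosSemidef.sqrt` of the older Mathlib, since removed). -/
def Matrix.PosSemidef.sqrt {n 𝕜 : Type*} [Fintype n] [DecidableEq n] [RCLike 𝕜]
    {A : Matrix n n 𝕜} (hA : A.PosSemidef) : Matrix n n 𝕜 :=
  hA.1.eigenvectorUnitary.1 * diagonal ((↑) ∘ (Real.sqrt ·) ∘ hA.1.eigenvalues) *
  (star hA.1.eigenvectorUnitary : Matrix n n 𝕜)

/-! Completing the square with a positive definite weight `P`, i.e.
`0 ≤ tr ((X - P Y)ᵀ P⁻¹ (X - P Y))`, gives the matrix AM-GM inequality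
`2 tr (X Yᵀ) ≤ tr (P⁻¹ X Xᵀ) + tr (P Y Yᵀ)`. Take `X Xᵀ = T S²`, `Y Yᵀ = T I` and `P = S + ε I`:
since `P² - S² = 2 ε S + ε² I ⪰ 0`, we get `tr (P⁻¹ S²) ≤ tr P`, so the right-hand side is at most
`2 T tr P = 2 T (tr S + N ε)`. The regularization is needed because `S` may be singular; let
`ε → 0`. -/

namespace Matrix

open scoped ComplexOrder MatrixOrder Topology
open Filter

variable {n 𝕜 : Type*} [Fintype n] [DecidableEq n] [RCLike 𝕜] {A : Matrix n n 𝕜}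

lemma PosSemidef.sqrt_eq_cfc (hA : A.PosSemidef) : hA.sqrt = cfc Real.sqrt A := by
  rw [hA.1.cfc_eq, IsHermitian.cfc, Unitary.conjStarAlgAut_apply]
  rfl

lemma PosSemidef.sqrt_mul_sqrt (hA : A.PosSemidef) : hA.sqrt * hA.sqrt = A := by
  have hA0 : 0 ≤ A := nonneg_iff_posSemidef.mpr hA
  rw [hA.sqrt_eq_cfc, ← cfc_mul Real.sqrt Real.sqrt A]
  conv_rhs => rw [← cfc_id' ℝ A]
  exact cfc_congr fun x hx => Real.mul_self_sqrt (spectrum_nonneg_of_nonneg hA0 hx)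

lemma PosSemidef.posSemidef_sqrt (hA : A.PosSemidef) : hA.sqrt.PosSemidef := by
  rw [hA.sqrt_eq_cfc, ← nonneg_iff_posSemidef]
  exact cfc_nonneg fun x _ => Real.sqrt_nonneg x

lemma PosSemidef.trace_mul_nonneg {B : Matrix n n 𝕜} (hA : A.PosSemidef) (hB : B.PosSemidef) :
    0 ≤ (A * B).trace :=
  calc 0 ≤ (hA.sqrtᴴ * B * hA.sqrt).trace := (hB.conjTranspose_mul_mul_same _).trace_nonneg
    _ = (A * B).trace := by
      rw [hA.posSemidef_sqrt.1.eq, trace_mul_cycle, hA.sqrt_mul_sqrt]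

section Real

variable {m : Type*} [Fintype m]

lemma PosDef.two_mul_trace_mul_transpose_le {P : Matrix n n ℝ} (hP : P.PosDef)
    (X Y : Matrix n m ℝ) :
    2 * (X * Yᵀ).trace ≤ (P⁻¹ * (X * Xᵀ)).trace + (P * (Y * Yᵀ)).trace := by
  have hdet : IsUnit P.det := (isUnit_iff_isUnit_det P).mp hP.isUnit
  have hsq := (hP.inv.posSemidef.conjTranspose_mul_mul_same (X - P * Y)).trace_nonneg
  have hXY : (Xᵀ * Y).trace = (X * Yᵀ).trace := by
    rw [← trace_transpose_mul, transpose_transpose]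
  rw [conjTranspose_eq_transpose_of_trivial, transpose_sub, transpose_mul,
    ← conjTranspose_eq_transpose_of_trivial P, hP.1.eq] at hsq
  simp only [Matrix.sub_mul, Matrix.mul_sub, Matrix.mul_assoc, nonsing_inv_mul_cancel_left P _ hdet,
    mul_nonsing_inv_cancel_left P _ hdet, trace_sub] at hsq
  rw [trace_mul_comm Xᵀ, trace_mul_comm Yᵀ X, trace_mul_comm Yᵀ, hXY] at hsq
  simp only [Matrix.mul_assoc] at hsq
  linarith

lemma PosSemidef.trace_inv_add_smul_one_mul_mul_self_le {S : Matrix n n ℝ} (hS : S.PosSemidef)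
    {ε : ℝ} (hε : 0 < ε) :
    ((S + ε • 1)⁻¹ * (S * S)).trace ≤ (S + ε • 1).trace := by
  set P := S + ε • (1 : Matrix n n ℝ)
  have hP : P.PosDef := PosDef.posSemidef_add hS (PosDef.one.smul hε)
  have hdet : IsUnit P.det := (isUnit_iff_isUnit_det P).mp hP.isUnit
  have hgap : (P * P - S * S).PosSemidef := by
    have : P * P - S * S = (2 * ε) • S + (ε * ε) • 1 := by
      simp only [P, Matrix.add_mul, Matrix.mul_add, Matrix.smul_mul, Matrix.mul_smul,
        Matrix.one_mul, Matrix.mul_one]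
      module
    rw [this]
    exact (hS.smul (by positivity)).add (PosSemidef.one.smul (by positivity))
  have := hgap.trace_mul_nonneg hP.inv.posSemidef
  rw [Matrix.sub_mul, trace_sub, mul_nonsing_inv_cancel_right P _ hdet, trace_mul_comm] at this
  linarith

lemma PosSemidef.trace_mul_transpose_le_mul_trace {S : Matrix n n ℝ} (hS : S.PosSemidef) {c : ℝ}
    (hc : 0 ≤ c) {X Y : Matrix n m ℝ} (hX : X * Xᵀ = c • (S * S)) (hY : Y * Yᵀ = c • 1) :
    (X * Yᵀ).trace ≤ c * S.trace := by
  have hbound : ∀ ε > 0, (X * Yᵀ).trace ≤ c * S.trace + ε * (c * Fintype.card n) := by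
    intro ε hε
    have hamgm := (PosDef.posSemidef_add hS (PosDef.one.smul hε)).two_mul_trace_mul_transpose_le X Y
    have hgap := mul_le_mul_of_nonneg_left (hS.trace_inv_add_smul_one_mul_mul_self_le hε) hc
    rw [hX, hY, Matrix.mul_smul, Matrix.mul_smul, Matrix.mul_one, trace_smul, trace_smul,
      smul_eq_mul, smul_eq_mul] at hamgm
    have htrace : (S + ε • 1).trace = S.trace + ε * Fintype.card n := by
      rw [trace_add, trace_smul, trace_one, smul_eq_mul]
    rw [htrace] at hamgm hgap
    linarith
  have hlim : Tendsto (fun ε : ℝ => c * S.trace + ε * (c * Fintype.card n)) (𝓝[>] 0)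
      (𝓝 (c * S.trace)) := by
    have hcont : Continuous fun ε : ℝ => c * S.trace + ε * (c * Fintype.card n) := by fun_prop
    simpa using tendsto_nhdsWithin_of_tendsto_nhds (hcont.tendsto 0)
  exact ge_of_tendsto hlim (eventually_nhdsWithin_of_forall hbound)

end Real

end Matrix

/-- Trace-maximization bound (Appendix B, via Von Neumann's trace inequality): for any
`Y` with `Y Yᵀ = T I_N`, the correlation `Tr(X Yᵀ)` is at most `T · Tr(C^{1/2})`, where
`C = (1/T) X Xᵀ` and `C^{1/2}` is its positive semidefinite square root. -/
theorem trace_correlation_le_trace_sqrt_cov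
    (N T : ℕ) (hT : 1 ≤ T)
    (X : Matrix (Fin N) (Fin T) ℝ)
    (hC : Matrix.PosSemidef ((T : ℝ)⁻¹ • (X * Xᵀ)))
    (Y : Matrix (Fin N) (Fin T) ℝ)
    (hY : Y * Yᵀ = (T : ℝ) • (1 : Matrix (Fin N) (Fin N) ℝ)) :
    (X * Yᵀ).trace ≤ (T : ℝ) * hC.sqrt.trace := by
  have hT₀ : (T : ℝ) ≠ 0 := Nat.cast_ne_zero.mpr (Nat.one_le_iff_ne_zero.mp hT)
  have hX : X * Xᵀ = (T : ℝ) • (hC.sqrt * hC.sqrt) := by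
    rw [hC.sqrt_mul_sqrt, smul_smul, mul_inv_cancel₀ hT₀, one_smul]
  exact hC.posSemidef_sqrt.trace_mul_transpose_le_mul_trace T.cast_nonneg hX hY
end
end

section
/- Let W = [w_1, …, w_K] ∈ ℝ^{N×K} and suppose the K×K matrix (Wᵀ W)^{∘2} (the entrywise square of Wᵀ W) is invertible. Let C be an N×N real matrix and suppose g ∈ ℝ^K satisfies W diag(g) Wᵀ = C. Then g = ((Wᵀ W)^{∘2})^{-1} · diag(Wᵀ C W); in particular, g is the unique vector in ℝ^K with W diag(g) Wᵀ = C. -/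
open Matrix BigOperators

noncomputable section

lemma diag_key (N K : ℕ) (W : Matrix (Fin N) (Fin K) ℝ) (g : Fin K → ℝ) :
    (Wᵀ * (W * Matrix.diagonal g * Wᵀ) * W).diag
      = ((Wᵀ * W) ⊙ (Wᵀ * W)).mulVec g := by
  funext k
  have h : Wᵀ * (W * Matrix.diagonal g * Wᵀ) * W
      = (Wᵀ * W) * Matrix.diagonal g * (Wᵀ * W) := by
    simp only [Matrix.mul_assoc]
  rw [h]
  simp only [Matrix.diag, Matrix.mulVec, Matrix.mul_apply, Matrix.hadamard_apply,
    Matrix.mul_diagonal, dotProduct]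
  refine Finset.sum_congr rfl fun j _ => ?_
  rw [Finset.sum_eq_single j (fun b _ hb => by rw [Matrix.diagonal_apply_ne _ hb, mul_zero])
    (by simp), Matrix.diagonal_apply_eq]
  have hsym : (Wᵀ * W) j k = (Wᵀ * W) k j := by
    simp [Matrix.mul_apply, mul_comm]
  simp only [Matrix.mul_apply] at hsym ⊢
  rw [hsym]; ring

/-- Analytic formula for the optimal gains (Eqs. 13, 19–20): if the entrywise-squared Gram
matrix `(WᵀW)^{∘2}` is invertible and `W diag(g) Wᵀ = C`, then
`g = ((WᵀW)^{∘2})⁻¹ diag(Wᵀ C W)`; in particular `g` is the unique such vector. -/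
theorem optimal_gains_formula_unique
    (N K : ℕ)
    (W : Matrix (Fin N) (Fin K) ℝ)
    (hinv : IsUnit ((Wᵀ * W) ⊙ (Wᵀ * W)))
    (C : Matrix (Fin N) (Fin N) ℝ)
    (g : Fin K → ℝ)
    (hfact : W * Matrix.diagonal g * Wᵀ = C) :
    g = ((Wᵀ * W) ⊙ (Wᵀ * W))⁻¹.mulVec ((Wᵀ * C * W).diag) ∧
      ∀ g' : Fin K → ℝ, W * Matrix.diagonal g' * Wᵀ = C → g' = g := by
  have key : ∀ g' : Fin K → ℝ, W * Matrix.diagonal g' * Wᵀ = C →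
      g' = ((Wᵀ * W) ⊙ (Wᵀ * W))⁻¹.mulVec ((Wᵀ * C * W).diag) := by
    intro g' h
    have := diag_key N K W g'
    rw [h] at this
    rw [this, Matrix.mulVec_mulVec, Matrix.nonsing_inv_mul _ ((Matrix.isUnit_iff_isUnit_det _).mp hinv), Matrix.one_mulVec]
  refine ⟨key g hfact, fun g' h => ?_⟩
  rw [key g' h, key g hfact]
end
end
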